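/- Let G be an NB-irreducible graph and β:E⃗→ℝ⁺ a strictly positive function on the directed edges. Define the modified matrix Π_β by (Π_β)_{e,f} = Π_{e,f}·β(e), where Π is the NBRW transition matrix. Then the Perron eigenvalue of Π_β satisfies ρ(Π_β) = lim_{ℓ→∞} (E_{Ω_ℓ}[X_β])^{1/ℓ} ≥ (∏_{e∈E⃗} β(e))^{1/|E⃗|}, where X_β(ω)=∏_{i=0}^{ℓ−1} β(e_i) for ω=(e_0,…,e_ℓ)∈Ω_ℓ. -/

import Mathlib

open Finset Filter
set_option linter.unusedSectionVars false
set_option linter.unusedVariables false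
set_option maxHeartbeats 1000000

namespace NB

variable {V : Type} [Fintype V] [DecidableEq V] (G : SimpleGraph V) [DecidableRel G.Adj]

/-- Transition relation between darts: `e → f` iff the head of `e` is the tail of `f`
and `f` is not the reversal of `e`. -/
def Step (d e : G.Dart) : Prop := d.snd = e.fst ∧ e ≠ d.symm

instance (d e : G.Dart) : Decidable (Step G d e) :=
  inferInstanceAs (Decidable (d.snd = e.fst ∧ e ≠ d.symm))

/-- `outdeg(e) = deg(h(e)) - 1`. -/
def outdeg (d : G.Dart) : ℕ := G.degree d.snd - 1

/-- `indeg(e) = deg(t(e)) - 1`. -/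
def indeg (d : G.Dart) : ℕ := G.degree d.fst - 1

/-- The non-backtracking adjacency matrix. -/
def B : Matrix G.Dart G.Dart ℝ := fun d e => if Step G d e then 1 else 0

/-- The NBRW transition matrix. -/
noncomputable def transMat : Matrix G.Dart G.Dart ℝ :=
  fun d e => if Step G d e then ((outdeg G d : ℝ))⁻¹ else 0

/-- NB-irreducibility: connected, min degree ≥ 2, max degree > 2. -/
def NBIrreducible : Prop :=
  G.Connected ∧ (∀ v, 2 ≤ G.degree v) ∧ (∃ v, 2 < G.degree v)

/-- `Λ(G)`, the geometric mean of out-degrees over directed edges. -/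
noncomputable def Lambda : ℝ :=
  (∏ d : G.Dart, (outdeg G d : ℝ)) ^ ((Fintype.card G.Dart : ℝ)⁻¹)

/-- The Perron (largest real) eigenvalue of a matrix. -/
noncomputable def perron {n : Type} [Fintype n] (M : Matrix n n ℝ) : ℝ :=
  sSup {r : ℝ | ∃ v : n → ℝ, v ≠ 0 ∧ M.mulVec v = r • v}

/-- A length-`ℓ` non-backtracking walk is a sequence of `ℓ+1` darts with consecutive
transitions. -/
def IsNBWalk {ℓ : ℕ} (ω : Fin (ℓ + 1) → G.Dart) : Prop :=
  ∀ i : Fin ℓ, Step G (ω i.castSucc) (ω i.succ)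

instance {ℓ : ℕ} (ω : Fin (ℓ + 1) → G.Dart) : Decidable (IsNBWalk G ω) :=
  inferInstanceAs (Decidable (∀ i : Fin ℓ, Step G (ω i.castSucc) (ω i.succ)))

/-- The set `Ω_ℓ` of length-`ℓ` non-backtracking walks. -/
def NBWalk (ℓ : ℕ) : Type := {ω : Fin (ℓ + 1) → G.Dart // IsNBWalk G ω}

instance (ℓ : ℕ) : Fintype (NBWalk G ℓ) := Subtype.fintype _

/-- The NBRW probability of a walk, started from the uniform stationary distribution. -/
noncomputable def mu {ℓ : ℕ} (ω : NBWalk G ℓ) : ℝ :=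
  (Fintype.card G.Dart : ℝ)⁻¹ * ∏ i : Fin ℓ, ((outdeg G (ω.1 i.castSucc) : ℝ))⁻¹

/-- Expectation over `Ω_ℓ` with respect to `μ`. -/
noncomputable def expect {ℓ : ℕ} (X : NBWalk G ℓ → ℝ) : ℝ :=
  ∑ ω : NBWalk G ℓ, mu G ω * X ω

/-- Variance over `Ω_ℓ` with respect to `μ`. -/
noncomputable def var {ℓ : ℕ} (X : NBWalk G ℓ → ℝ) : ℝ :=
  expect G (fun ω => (X ω - expect G X) ^ 2)

/-- `R_ℓ(ω) = ∑ log₂ outdeg(e_i)`: the number of random bits consumed. -/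
noncomputable def bits {ℓ : ℕ} (ω : NBWalk G ℓ) : ℝ :=
  ∑ i : Fin ℓ, Real.logb 2 (outdeg G (ω.1 i.castSucc))

/-- A suspended path `(e_0, …, e_n)` (of length `n+1`). -/
def IsSuspendedPath {n : ℕ} (P : Fin (n + 1) → G.Dart) : Prop :=
  (∀ i : Fin n, Step G (P i.castSucc) (P i.succ)) ∧
  (∀ i : Fin n, outdeg G (P i.castSucc) = 1) ∧
  1 < outdeg G (P (Fin.last n)) ∧
  (∀ i : Fin n, indeg G (P i.succ) = 1) ∧
  1 < indeg G (P 0)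

/-- The suspended path condition: `outdeg(P)·indeg(P) = Λ(G)^{2|P|}`. -/
noncomputable def SuspendedPathCondition : Prop :=
  ∀ (n : ℕ) (P : Fin (n + 1) → G.Dart), IsSuspendedPath G P →
    (outdeg G (P (Fin.last n)) : ℝ) * (indeg G (P 0) : ℝ) = Lambda G ^ (2 * (n + 1))

/-- A non-backtracking cycle `(e_0, …, e_n)` (of length `n+1`). -/
def IsNBCycle {n : ℕ} (C : Fin (n + 1) → G.Dart) : Prop :=
  ∀ i : Fin (n + 1), Step G (C i) (C (i + 1))

/-- The cycle condition: `∏_{e∈C} outdeg(e) = Λ(G)^{|C|}`. -/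
noncomputable def CycleCondition : Prop :=
  ∀ (n : ℕ) (C : Fin (n + 1) → G.Dart), IsNBCycle G C →
    (∏ i : Fin (n + 1), (outdeg G (C i) : ℝ)) = Lambda G ^ (n + 1)


section Dev
/-- Reachability in the dart graph. -/
def Reach (d e : G.Dart) : Prop := Relation.ReflTransGen (Step G) d e

variable {G}

lemma Dart.fst_ne_snd (d : G.Dart) : d.fst ≠ d.snd := d.adj.ne

lemma step_symm {d e : G.Dart} (h : Step G d e) : Step G e.symm d.symm := by
  obtain ⟨h1, h2⟩ := h
  refine ⟨by simp [SimpleGraph.Dart.symm, h1], ?_⟩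
  simp only [SimpleGraph.Dart.symm_symm]
  intro hde; exact h2 (by rw [hde])

lemma reach_symm {d e : G.Dart} (h : Reach G d e) : Reach G e.symm d.symm := by
  induction h with
  | refl => exact Relation.ReflTransGen.refl
  | tail _ hstep ih => exact Relation.ReflTransGen.head (step_symm hstep) ih

section MinDeg
variable (hmin : ∀ v, 2 ≤ G.degree v)
include hmin

/-- Every dart has a successor. -/
lemma exists_step (d : G.Dart) : ∃ e, Step G d e := by
  have h2 : 1 < (G.neighborFinset d.snd).card := by
    rw [G.card_neighborFinset_eq_degree]; exact hmin d.snd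
  obtain ⟨w, hw, hwne⟩ : ∃ w ∈ G.neighborFinset d.snd, w ≠ d.fst := by
    by_contra hcon
    push_neg at hcon
    have : (G.neighborFinset d.snd) ⊆ {d.fst} := fun x hx => by
      simp [hcon x hx]
    have hle : (G.neighborFinset d.snd).card ≤ 1 :=
      le_trans (Finset.card_le_card this) (by simp)
    omega
  rw [SimpleGraph.mem_neighborFinset] at hw
  refine ⟨⟨(d.snd, w), hw⟩, rfl, ?_⟩
  intro hcon
  have : w = d.fst := congrArg (fun x => x.snd) (congrArg SimpleGraph.Dart.toProd hcon)
  exact hwne this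

end MinDeg




section MinDeg2
variable (hmin : ∀ v, 2 ≤ G.degree v)
include hmin

/-- From any dart we can reach a dart that has a predecessor within its own reach set. -/
lemma exists_cycle_root (x : G.Dart) :
    ∃ c, Reach G x c ∧ ∃ p, Reach G c p ∧ Step G p c := by
  classical
  have hsucc : ∀ d : G.Dart, ∃ e, Step G d e := exists_step hmin
  choose succ hsucc using hsucc
  set seq : ℕ → G.Dart := fun n => succ^[n] x with hseq
  have hstep : ∀ n, Step G (seq n) (seq (n + 1)) := by
    intro n
    have : seq (n + 1) = succ (seq n) := Function.iterate_succ_apply' succ n x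
    rw [this]; exact hsucc _
  have hreach : ∀ m n, m ≤ n → Reach G (seq m) (seq n) := by
    intro m n hmn
    induction n with
    | zero => cases Nat.le_zero.mp hmn; exact Relation.ReflTransGen.refl
    | succ k ih =>
      rcases Nat.lt_or_ge m (k+1) with hlt | hge
      · exact Relation.ReflTransGen.tail (ih (Nat.lt_succ_iff.mp hlt)) (hstep k)
      · have : m = k + 1 := le_antisymm hmn hge
        subst this; exact Relation.ReflTransGen.refl
  obtain ⟨i, j, hij, hfeq⟩ := Finite.exists_ne_map_eq_of_infinite seq
  rcases Nat.lt_or_ge i j with hlt | hge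
  · refine ⟨seq j, hreach 0 j (Nat.zero_le _), seq (j - 1), ?_, ?_⟩
    · rw [← hfeq]; exact hreach _ _ (by omega)
    · have : j - 1 + 1 = j := by omega
      have h := hstep (j - 1); rwa [this] at h
  · have hlt : j < i := lt_of_le_of_ne hge (Ne.symm hij)
    refine ⟨seq i, hreach 0 i (Nat.zero_le _), seq (i - 1), ?_, ?_⟩
    · rw [hfeq]; exact hreach _ _ (by omega)
    · have : i - 1 + 1 = i := by omega
      have h := hstep (i - 1); rwa [this] at h

/-- Predecessor property propagates along reachability. -/
lemma pred_of_reach {c y : G.Dart} (hc : ∃ p, Reach G c p ∧ Step G p c)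
    (hy : Reach G c y) : ∃ p, Reach G c p ∧ Step G p y := by
  rcases Relation.ReflTransGen.cases_tail hy with rfl | ⟨z, hz, hstep⟩
  · exact hc
  · exact ⟨z, hz, hstep⟩

variable (hconn : G.Preconnected)
include hconn

/-- If the root has a predecessor in its reach set, then every vertex is the head of
some reachable dart. -/
lemma head_surj_of_pred (c : G.Dart) (hc : ∃ p, Reach G c p ∧ Step G p c) (w : V) :
    ∃ y, Reach G c y ∧ y.snd = w := by
  classical
  set S : Set V := {w | ∃ y, Reach G c y ∧ y.snd = w} with hS
  have hclosed : ∀ a ∈ S, ∀ b, G.Adj a b → b ∈ S := by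
    rintro a ⟨y, hy, rfl⟩ b hab
    by_cases hb : b = y.fst
    · obtain ⟨p, hp, hstep⟩ := pred_of_reach hmin hc hy
      exact ⟨p, hp, by rw [hstep.1, hb]⟩
    · refine ⟨⟨(y.snd, b), hab⟩, Relation.ReflTransGen.tail hy ⟨rfl, ?_⟩, rfl⟩
      intro hcon
      exact hb (congrArg (fun x => x.toProd.2) hcon)
  have hmem : ∀ u w, u ∈ S → w ∈ S ∨ ¬ (∃ _ : G.Walk u w, True) → True := fun _ _ _ _ => trivial
  have key : ∀ {u w : V}, u ∈ S → G.Walk u w → w ∈ S := by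
    intro u w hu p
    induction p with
    | nil => exact hu
    | cons hadj _ ih => exact ih (hclosed _ hu _ hadj)
  have hc0 : c.snd ∈ S := ⟨c, Relation.ReflTransGen.refl, rfl⟩
  exact key hc0 (hconn c.snd w).some

/-- From any dart, every vertex is the head of some reachable dart. -/
lemma head_surj (x : G.Dart) (w : V) : ∃ y, Reach G x y ∧ y.snd = w := by
  obtain ⟨c, hxc, hc⟩ := exists_cycle_root hmin x
  obtain ⟨y, hcy, hyw⟩ := head_surj_of_pred hmin hconn c hc w
  exact ⟨y, hxc.trans hcy, hyw⟩

end MinDeg2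




section ClaimA
variable (hmin : ∀ v, 2 ≤ G.degree v) (hconn : G.Preconnected)
include hmin hconn

/-- Claim A at a vertex of degree ≥ 3: a dart can reach its own reversal. -/
lemma reach_symm_self_of_deg3 (a : G.Dart) (hdeg : 2 < G.degree a.snd) :
    Reach G a a.symm := by
  classical
  set v := a.snd with hv
  set u := a.fst with hu
  by_cases hb : ∃ b, Reach G a b ∧ b.snd = v ∧ b ≠ a
  · obtain ⟨b, hab, hbv, hba⟩ := hb
    refine Relation.ReflTransGen.tail hab ⟨by simp [hbv, SimpleGraph.Dart.symm]; rfl, ?_⟩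
    intro hcon
    exact hba (by have := congrArg SimpleGraph.Dart.symm hcon; simpa using this.symm)
  push_neg at hb
  have hbad : ∀ b, Reach G a b → b.snd = v → b = a := hb
  exfalso
  -- a has a predecessor in its reach set
  obtain ⟨f, hf⟩ := exists_step hmin a
  have hfa : Reach G f a := by
    obtain ⟨b, hfb, hbv⟩ := head_surj hmin hconn f v
    have hba : b = a := hbad b (Relation.ReflTransGen.head hf hfb) hbv
    rwa [hba] at hfb
  have hfnea : f ≠ a := by
    intro hcon
    have := hf.1
    rw [hcon] at this
    exact a.adj.ne' this
  have hpred : ∃ p, Reach G a p ∧ Step G p a := by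
    rcases Relation.ReflTransGen.cases_tail hfa with h | ⟨p, hfp, hpa⟩
    · exact absurd h hfnea.symm
    · exact ⟨p, Relation.ReflTransGen.head hf hfp, hpa⟩
  -- every vertex is the head of a reachable dart; choose one
  have hhead : ∀ w : V, ∃ y, Reach G a y ∧ y.snd = w := head_surj_of_pred hmin hconn a hpred
  choose Y hYreach hYsnd using hhead
  set σ : V → V := fun w => (Y w).fst with hσ
  have hσadj : ∀ w, G.Adj w (σ w) := fun w => by
    have := (Y w).adj
    rw [hYsnd w] at this
    exact this.symm
  -- the set of vertices all whose reachable in-darts share a common tail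
  set T : Finset V := Finset.univ.filter
    (fun t => ∀ y : G.Dart, Reach G a y → y.snd = t → y.fst = σ t) with hT
  have hvT : v ∈ T := by
    have hYv : Y v = a := hbad _ (hYreach v) (hYsnd v)
    rw [hT, Finset.mem_filter]
    refine ⟨Finset.mem_univ _, fun y hy hyv => ?_⟩
    rw [hbad y hy hyv]
    show a.fst = (Y v).fst
    rw [hYv]
  have hclosure : ∀ t ∈ T, ∀ r, G.Adj t r → r ≠ σ t →
      (∀ y : G.Dart, Reach G a y → y.snd = r → y.fst = t) := by
    intro t ht r hadj hrσ y hy hyr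
    by_contra hyt
    -- y ≠ dart (t, r); build successor into t and contradict t ∈ T
    have hstep : Step G y ⟨(r, t), hadj.symm⟩ := by
      refine ⟨hyr, ?_⟩
      intro hcon
      apply hyt
      have h2 := congrArg (fun d => d.toProd.2) hcon
      simp [SimpleGraph.Dart.symm] at h2
      exact h2.symm
    have hreach' : Reach G a (⟨(r, t), hadj.symm⟩ : G.Dart) :=
      Relation.ReflTransGen.tail hy hstep
    have := (Finset.mem_filter.mp ht).2 _ hreach' rfl
    simp at this
    exact hrσ this
  have hσT : ∀ t ∈ T, ∀ r, G.Adj t r → r ≠ σ t → (r ∈ T ∧ σ r = t) := by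
    intro t ht r hadj hrσ
    have huniq := hclosure t ht r hadj hrσ
    have hσr : σ r = t := huniq (Y r) (hYreach r) (hYsnd r)
    refine ⟨?_, hσr⟩
    rw [hT, Finset.mem_filter]
    exact ⟨Finset.mem_univ _, fun y hy hyr => by rw [huniq y hy hyr, hσr]⟩
  -- counting
  set A : V → Finset V := fun t => (G.neighborFinset t).erase (σ t) with hA
  have hAsub : ∀ t ∈ T, A t ⊆ T := by
    intro t ht r hr
    rw [hA] at hr
    obtain ⟨hne, hmem⟩ := Finset.mem_erase.mp hr
    exact (hσT t ht r ((SimpleGraph.mem_neighborFinset _ _ _).mp hmem) hne).1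
  have hAσ : ∀ t ∈ T, ∀ r ∈ A t, σ r = t := by
    intro t ht r hr
    obtain ⟨hne, hmem⟩ := Finset.mem_erase.mp hr
    exact (hσT t ht r ((SimpleGraph.mem_neighborFinset _ _ _).mp hmem) hne).2
  have hdisj : ∀ t ∈ T, ∀ t' ∈ T, t ≠ t' → Disjoint (A t) (A t') := by
    intro t ht t' ht' hne
    rw [Finset.disjoint_left]
    intro r hr hr'
    exact hne ((hAσ t ht r hr).symm.trans (hAσ t' ht' r hr'))
  have hcard : ∀ t, (A t).card = G.degree t - 1 := by
    intro t
    rw [hA]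
    rw [Finset.card_erase_of_mem ((SimpleGraph.mem_neighborFinset _ _ _).mpr (hσadj t)),
      G.card_neighborFinset_eq_degree]
  have hsum_le : ∑ t ∈ T, (A t).card ≤ T.card := by
    rw [← Finset.card_biUnion hdisj]
    apply Finset.card_le_card
    intro r hr
    obtain ⟨t, ht, hrt⟩ := Finset.mem_biUnion.mp hr
    exact hAsub t ht hrt
  have hsum_gt : T.card < ∑ t ∈ T, (A t).card := by
    have h1 : ∀ t ∈ T, 1 ≤ (A t).card := by
      intro t _
      rw [hcard t]
      have := hmin t; omega
    calc T.card = ∑ _t ∈ T, 1 := by simp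
    _ < ∑ t ∈ T, (A t).card := by
        apply Finset.sum_lt_sum h1
        refine ⟨v, hvT, ?_⟩
        rw [hcard v]
        omega
  omega

/-- Claim A: every dart reaches its own reversal. -/
lemma reach_symm_self (hdeg3 : ∃ v, 2 < G.degree v) (a : G.Dart) : Reach G a a.symm := by
  obtain ⟨w, hw⟩ := hdeg3
  obtain ⟨e, hae, hew⟩ := head_surj hmin hconn a w
  have h1 : Reach G e e.symm := reach_symm_self_of_deg3 hmin hconn e (hew ▸ hw)
  have h2 : Reach G e.symm a.symm := reach_symm hae
  exact (hae.trans h1).trans h2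

/-- Strong connectivity of the dart graph. -/
lemma reach_all (hdeg3 : ∃ v, 2 < G.degree v) (d e : G.Dart) : Reach G d e := by
  obtain ⟨b, hdb, hbe⟩ := head_surj hmin hconn d e.fst
  by_cases hbe' : e = b.symm
  · rw [hbe']; exact hdb.trans (reach_symm_self hmin hconn hdeg3 b)
  · exact Relation.ReflTransGen.tail hdb ⟨hbe, hbe'⟩

end ClaimA



section MatrixPos

variable {D : Type} [Fintype D] [DecidableEq D]

/-- Entrywise nonnegativity is preserved by powers. -/
lemma pow_entry_nonneg {M : Matrix D D ℝ} (hM : ∀ i j, 0 ≤ M i j) (k : ℕ) :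
    ∀ i j, 0 ≤ (M ^ k) i j := by
  induction k with
  | zero => intro i j; rw [pow_zero]; by_cases hij : i = j <;> simp [Matrix.one_apply, hij]
  | succ n ih =>
    intro i j
    rw [pow_succ, Matrix.mul_apply]
    exact Finset.sum_nonneg fun c _ => mul_nonneg (ih i c) (hM c j)

lemma mul_entry_le_mul {A B C : Matrix D D ℝ} (hAB : ∀ i j, A i j ≤ B i j)
    (hA : ∀ i j, 0 ≤ A i j) (hC : ∀ i j, 0 ≤ C i j) :
    ∀ i j, (A * C) i j ≤ (B * C) i j := by
  intro i j
  rw [Matrix.mul_apply, Matrix.mul_apply]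
  exact Finset.sum_le_sum fun c _ => mul_le_mul_of_nonneg_right (hAB i c) (hC c j)

lemma one_add_entry_nonneg {M : Matrix D D ℝ} (hM : ∀ i j, 0 ≤ M i j) :
    ∀ i j, 0 ≤ (1 + M) i j := by
  intro i j
  rw [Matrix.add_apply]
  by_cases hij : i = j
  · subst hij; rw [Matrix.one_apply_eq]; exact add_nonneg zero_le_one (hM i i)
  · rw [Matrix.one_apply_ne hij, zero_add]; exact hM i j

lemma le_mul_one_add {A M : Matrix D D ℝ} (hA : ∀ i j, 0 ≤ A i j) (hM : ∀ i j, 0 ≤ M i j) :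
    ∀ i j, A i j ≤ (A * (1 + M)) i j := by
  intro i j
  rw [Matrix.mul_add, Matrix.mul_one, Matrix.add_apply]
  refine le_add_of_nonneg_right ?_
  rw [Matrix.mul_apply]
  exact Finset.sum_nonneg fun c _ => mul_nonneg (hA i c) (hM c j)

/-- `M^k ≤ (1+M)^k` entrywise for nonnegative `M`. -/
lemma pow_le_one_add_pow {M : Matrix D D ℝ} (hM : ∀ i j, 0 ≤ M i j) (k : ℕ) :
    ∀ i j, (M ^ k) i j ≤ ((1 + M) ^ k) i j := by
  induction k with
  | zero => intro i j; simp
  | succ n ih =>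
    intro i j
    calc (M ^ (n+1)) i j = (M ^ n * M) i j := by rw [pow_succ]
    _ ≤ ((1+M) ^ n * M) i j := mul_entry_le_mul ih (pow_entry_nonneg hM n) hM i j
    _ ≤ ((1+M) ^ n * (1+M)) i j := by
        rw [Matrix.mul_apply, Matrix.mul_apply]
        refine Finset.sum_le_sum fun c _ => ?_
        refine mul_le_mul_of_nonneg_left ?_ (pow_entry_nonneg (one_add_entry_nonneg hM) n i c)
        rw [Matrix.add_apply]
        by_cases hcj : c = j
        · subst hcj; rw [Matrix.one_apply_eq]; exact le_add_of_nonneg_left zero_le_one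
        · rw [Matrix.one_apply_ne hcj, zero_add]
    _ = ((1+M) ^ (n+1)) i j := by rw [← pow_succ]

/-- `(1+M)^k ≤ (1+M)^m` entrywise for `k ≤ m`. -/
lemma one_add_pow_mono {M : Matrix D D ℝ} (hM : ∀ i j, 0 ≤ M i j) {k m : ℕ} (hkm : k ≤ m) :
    ∀ i j, ((1 + M) ^ k) i j ≤ ((1 + M) ^ m) i j := by
  induction m with
  | zero => cases Nat.le_zero.mp hkm; intro i j; exact le_refl _
  | succ n ih =>
    rcases Nat.lt_or_ge k (n+1) with hlt | hge
    · intro i j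
      refine le_trans (ih (Nat.lt_succ_iff.mp hlt) i j) ?_
      have := le_mul_one_add (A := (1+M)^n) (M := M)
        (pow_entry_nonneg (one_add_entry_nonneg hM) n) hM i j
      rwa [← pow_succ] at this
    · have : k = n + 1 := le_antisymm hkm hge
      subst this; intro i j; exact le_refl _

end MatrixPos



section MatrixPos2

variable {D : Type} [Fintype D] [DecidableEq D]

lemma exists_pow_pos {r : D → D → Prop} {M : Matrix D D ℝ}
    (hnn : ∀ i j, 0 ≤ M i j) (hpos : ∀ i j, r i j → 0 < M i j)
    {d e : D} (h : Relation.ReflTransGen r d e) : ∃ k, 0 < (M ^ k) d e := by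
  induction h with
  | refl => exact ⟨0, by simp [Matrix.one_apply_eq]⟩
  | @tail b c _ hbc ih =>
    obtain ⟨k, hk⟩ := ih
    refine ⟨k + 1, ?_⟩
    rw [pow_succ, Matrix.mul_apply]
    have hterm : 0 < (M ^ k) d b * M b c := mul_pos hk (hpos _ _ hbc)
    refine lt_of_lt_of_le hterm ?_
    refine Finset.single_le_sum (f := fun j => (M ^ k) d j * M j c) ?_ (Finset.mem_univ b)
    exact fun j _ => mul_nonneg (pow_entry_nonneg hnn k d j) (hnn j c)

/-- If every pair is connected by the relation, some power of `1 + M` is entrywise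
positive. -/
lemma exists_one_add_pow_pos {r : D → D → Prop} {M : Matrix D D ℝ}
    (hnn : ∀ i j, 0 ≤ M i j) (hpos : ∀ i j, r i j → 0 < M i j)
    (hirr : ∀ d e : D, Relation.ReflTransGen r d e) [Nonempty D] :
    ∃ m, ∀ d e, 0 < (((1 + M) ^ m : Matrix D D ℝ)) d e := by
  classical
  have hk : ∀ p : D × D, ∃ k, 0 < (M ^ k) p.1 p.2 :=
    fun p => exists_pow_pos hnn hpos (hirr p.1 p.2)
  choose K hK using hk
  refine ⟨Finset.univ.sup K, fun d e => ?_⟩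
  calc (0:ℝ) < (M ^ K (d, e)) d e := hK (d, e)
  _ ≤ ((1 + M) ^ K (d, e)) d e := pow_le_one_add_pow hnn _ d e
  _ ≤ ((1 + M) ^ Finset.univ.sup K) d e :=
      one_add_pow_mono hnn (Finset.le_sup (Finset.mem_univ (d, e))) d e

end MatrixPos2



section PF

variable {D : Type} [Fintype D] [DecidableEq D] [Nonempty D]

lemma mulVec_one_add_pow (M : Matrix D D ℝ) (x : D → ℝ) (ρ : ℝ)
    (heig : M.mulVec x = ρ • x) (m : ℕ) :
    (((1 + M) ^ m : Matrix D D ℝ)).mulVec x = ((1 + ρ) ^ m) • x := by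
  induction m with
  | zero => simp [Matrix.one_mulVec]
  | succ n ih =>
    have h1 : ((1 + M) : Matrix D D ℝ).mulVec x = (1 + ρ) • x := by
      rw [Matrix.add_mulVec, Matrix.one_mulVec, heig]
      ext i
      simp only [Pi.add_apply, Pi.smul_apply, smul_eq_mul]
      ring
    rw [pow_succ, ← Matrix.mulVec_mulVec, h1, Matrix.mulVec_smul, ih, smul_smul, ← pow_succ']

/-- Perron--Frobenius for a nonnegative matrix with a positive power of `1 + M`. -/
theorem pf_core (M : Matrix D D ℝ) (hnn : ∀ i j, 0 ≤ M i j)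
    (hrow : ∀ i, ∃ j, 0 < M i j)
    (hprim : ∃ m, ∀ d e, 0 < (((1 + M) ^ m : Matrix D D ℝ)) d e) :
    ∃ (ρ : ℝ) (x : D → ℝ), 0 < ρ ∧ (∀ i, 0 < x i) ∧ M.mulVec x = ρ • x ∧
      (∀ (r : ℝ) (v : D → ℝ), v ≠ 0 → M.mulVec v = r • v → r ≤ ρ) := by
  classical
  obtain ⟨m, hP⟩ := hprim
  set P : Matrix D D ℝ := (1 + M) ^ m with hPdef
  set C : Set (ℝ × (D → ℝ)) := {p | 0 ≤ p.1 ∧ (∀ i, 0 ≤ p.2 i) ∧ (∑ i, p.2 i) = 1 ∧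
    ∀ i, p.1 * p.2 i ≤ M.mulVec p.2 i} with hC
  have hmvcont : ∀ i, Continuous (fun p : ℝ × (D → ℝ) => M.mulVec p.2 i) := by
    intro i
    simp only [Matrix.mulVec, dotProduct]
    exact continuous_finset_sum _ fun j _ =>
      continuous_const.mul ((continuous_apply j).comp continuous_snd)
  have hclosed : IsClosed C := by
    rw [hC]
    apply IsClosed.inter (isClosed_le continuous_const continuous_fst)
    apply IsClosed.inter
    · show IsClosed {p : ℝ × (D → ℝ) | ∀ i, 0 ≤ p.2 i}
      have : {p : ℝ × (D → ℝ) | ∀ i, 0 ≤ p.2 i} = ⋂ i, {p | 0 ≤ p.2 i} := by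
        ext p; simp
      rw [this]
      exact isClosed_iInter fun i =>
        isClosed_le continuous_const ((continuous_apply i).comp continuous_snd)
    apply IsClosed.inter
    · exact isClosed_eq (continuous_finset_sum _ fun j _ =>
        (continuous_apply j).comp continuous_snd) continuous_const
    · show IsClosed {p : ℝ × (D → ℝ) | ∀ i, p.1 * p.2 i ≤ M.mulVec p.2 i}
      have : {p : ℝ × (D → ℝ) | ∀ i, p.1 * p.2 i ≤ M.mulVec p.2 i} =
          ⋂ i, {p | p.1 * p.2 i ≤ M.mulVec p.2 i} := by ext p; simp
      rw [this]
      exact isClosed_iInter fun i => isClosed_le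
        (continuous_fst.mul ((continuous_apply i).comp continuous_snd)) (hmvcont i)
  have hbounded : Bornology.IsBounded C := by
    rw [Metric.isBounded_iff_subset_closedBall 0]
    refine ⟨1 + ∑ i, ∑ j, M i j, fun p hp => ?_⟩
    obtain ⟨hp1, hp2, hp3, hp4⟩ := hp
    have hRnn : (0:ℝ) ≤ ∑ i, ∑ j, M i j :=
      Finset.sum_nonneg fun i _ => Finset.sum_nonneg fun j _ => hnn i j
    have hxle1 : ∀ i, p.2 i ≤ 1 := by
      intro i
      rw [← hp3]
      exact Finset.single_le_sum (fun j _ => hp2 j) (Finset.mem_univ i)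
    have h1 : ‖p.1‖ ≤ 1 + ∑ i, ∑ j, M i j := by
      rw [Real.norm_of_nonneg hp1]
      have : p.1 = ∑ i, p.1 * p.2 i := by
        rw [← Finset.mul_sum, hp3, mul_one]
      rw [this]
      refine le_trans (Finset.sum_le_sum fun i _ => hp4 i) ?_
      refine le_trans (Finset.sum_le_sum fun i (_ : i ∈ Finset.univ) => ?_) (le_add_of_nonneg_left zero_le_one)
      show M.mulVec p.2 i ≤ ∑ j, M i j
      rw [Matrix.mulVec, dotProduct]
      exact Finset.sum_le_sum fun j _ => by
        calc M i j * p.2 j ≤ M i j * 1 := mul_le_mul_of_nonneg_left (hxle1 j) (hnn i j)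
        _ = M i j := mul_one _
    have h2 : ‖p.2‖ ≤ 1 + ∑ i, ∑ j, M i j := by
      refine le_trans ?_ (le_add_of_nonneg_right hRnn)
      rw [pi_norm_le_iff_of_nonneg zero_le_one]
      intro i
      rw [Real.norm_of_nonneg (hp2 i)]
      exact hxle1 i
    rw [Metric.mem_closedBall, dist_zero_right, Prod.norm_def]
    exact max_le h1 h2
  have hcomp : IsCompact C := Metric.isCompact_of_isClosed_isBounded hclosed hbounded
  -- C is nonempty
  set N : ℕ := Fintype.card D with hN
  have hNpos : 0 < N := Fintype.card_pos
  set x₀ : D → ℝ := fun _ => (N : ℝ)⁻¹ with hx₀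
  have hNinv : (0:ℝ) < (N:ℝ)⁻¹ := by positivity
  have hmv₀ : ∀ i, 0 < M.mulVec x₀ i := by
    intro i
    rw [Matrix.mulVec, dotProduct]
    obtain ⟨j, hj⟩ := hrow i
    refine Finset.sum_pos' (fun k _ => mul_nonneg (hnn i k) hNinv.le) ⟨j, Finset.mem_univ j, ?_⟩
    exact mul_pos hj hNinv
  set r₀ : ℝ := Finset.univ.inf' Finset.univ_nonempty (fun i => M.mulVec x₀ i) with hr₀
  have hr₀pos : 0 < r₀ := by
    rw [hr₀, Finset.lt_inf'_iff]
    exact fun i _ => hmv₀ i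
  have hsum₀ : (∑ i, x₀ i) = 1 := by
    rw [hx₀]
    simp only [Finset.sum_const, Finset.card_univ, nsmul_eq_mul]
    rw [← hN, mul_inv_cancel₀ (by positivity)]
  have hmem₀ : (r₀, x₀) ∈ C := by
    refine ⟨hr₀pos.le, fun i => hNinv.le, hsum₀, fun i => ?_⟩
    have h1 : r₀ ≤ M.mulVec x₀ i := Finset.inf'_le _ (Finset.mem_univ i)
    calc r₀ * x₀ i ≤ r₀ * 1 := by
          refine mul_le_mul_of_nonneg_left ?_ hr₀pos.le
          show (N:ℝ)⁻¹ ≤ 1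
          rw [inv_le_one_iff₀]; right; exact_mod_cast hNpos
    _ = r₀ := mul_one _
    _ ≤ M.mulVec x₀ i := h1
  obtain ⟨p, hpC, hpmax⟩ := hcomp.exists_isMaxOn ⟨_, hmem₀⟩ continuous_fst.continuousOn
  set ρ : ℝ := p.1 with hρ
  set x : D → ℝ := p.2 with hx
  obtain ⟨hρ0, hx0, hxsum, hineq⟩ := hpC
  have hmax : ∀ q ∈ C, q.1 ≤ ρ := fun q hq => hpmax hq
  have hρpos : 0 < r₀ := hr₀pos
  have hρge : r₀ ≤ ρ := hmax _ hmem₀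
  -- the eigenvector equation
  have hxipos : ∃ e₀, 0 < x e₀ := by
    by_contra hcon
    push_neg at hcon
    have : (∑ i, x i) = 0 := le_antisymm (Finset.sum_nonpos fun i _ => hcon i)
      (Finset.sum_nonneg fun i _ => hx0 i)
    rw [hxsum] at this; norm_num at this
  have heig : M.mulVec x = ρ • x := by
    by_contra hne'
    set y : D → ℝ := M.mulVec x - ρ • x with hy
    have hy0 : ∀ i, 0 ≤ y i := by
      intro i
      simp only [hy, Pi.sub_apply, Pi.smul_apply, smul_eq_mul, sub_nonneg]
      exact hineq i
    have hyne : ∃ j, 0 < y j := by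
      by_contra hcon
      push_neg at hcon
      apply hne'
      have : y = 0 := funext fun i => le_antisymm (hcon i) (hy0 i)
      rw [hy, sub_eq_zero] at this
      exact this
    obtain ⟨j, hyj⟩ := hyne
    set z : D → ℝ := P.mulVec x with hz
    have hPnn : ∀ i e, 0 ≤ P i e := fun i e => (hP i e).le
    have hzpos : ∀ i, 0 < z i := by
      intro i
      obtain ⟨e₀, he₀⟩ := hxipos
      rw [hz, Matrix.mulVec, dotProduct]
      refine Finset.sum_pos' (fun k _ => mul_nonneg (hPnn i k) (hx0 k)) ⟨e₀, Finset.mem_univ _, ?_⟩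
      exact mul_pos (hP i e₀) he₀
    have hcomm : M * P = P * M :=
      (((Commute.one_right M).add_right (Commute.refl M)).pow_right m)
    have hMz : M.mulVec z - ρ • z = P.mulVec y := by
      rw [hy, Matrix.mulVec_sub, Matrix.mulVec_smul, hz,
        Matrix.mulVec_mulVec, hcomm, ← Matrix.mulVec_mulVec]
    have hstrict : ∀ i, ρ * z i < M.mulVec z i := by
      intro i
      have : 0 < P.mulVec y i := by
        rw [Matrix.mulVec, dotProduct]
        refine lt_of_lt_of_le (mul_pos (hP i j) hyj) ?_
        refine Finset.single_le_sum (f := fun k => P i k * y k) ?_ (Finset.mem_univ j)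
        exact fun k _ => mul_nonneg (hPnn i k) (hy0 k)
      have h2 := congrFun hMz i
      simp only [Pi.sub_apply, Pi.smul_apply, smul_eq_mul] at h2
      rw [← h2] at this
      linarith
    set ε : ℝ := Finset.univ.inf' Finset.univ_nonempty
      (fun i => (M.mulVec z i - ρ * z i) / z i) with hε
    have hεpos : 0 < ε := by
      rw [hε, Finset.lt_inf'_iff]
      intro i _
      exact div_pos (by linarith [hstrict i]) (hzpos i)
    have hεle : ∀ i, (ρ + ε) * z i ≤ M.mulVec z i := by
      intro i
      have h1 : ε ≤ (M.mulVec z i - ρ * z i) / z i := Finset.inf'_le _ (Finset.mem_univ i)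
      have h2 : ε * z i ≤ M.mulVec z i - ρ * z i := by
        rw [← le_div_iff₀ (hzpos i)]; exact h1
      linarith
    have hzsum : 0 < ∑ i, z i := Finset.sum_pos (fun i _ => hzpos i) Finset.univ_nonempty
    set x' : D → ℝ := (∑ i, z i)⁻¹ • z with hx'
    have hmem' : (ρ + ε, x') ∈ C := by
      refine ⟨add_nonneg hρ0 hεpos.le, fun i => ?_, ?_, fun i => ?_⟩
      · exact mul_nonneg (inv_nonneg.mpr hzsum.le) (hzpos i).le
      · rw [hx']
        simp only [Pi.smul_apply, smul_eq_mul]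
        rw [← Finset.mul_sum, inv_mul_cancel₀ hzsum.ne']
      · rw [hx', Matrix.mulVec_smul]
        simp only [Pi.smul_apply, smul_eq_mul]
        rw [mul_comm (ρ + ε) _, mul_assoc, mul_comm _ (ρ + ε)]
        exact mul_le_mul_of_nonneg_left (hεle i) (inv_nonneg.mpr hzsum.le)
    have := hmax _ hmem'
    simp only at this
    linarith
  -- strict positivity of x
  have hPx : P.mulVec x = ((1 + ρ) ^ m) • x := mulVec_one_add_pow M x ρ heig m
  have hxpos : ∀ i, 0 < x i := by
    intro i
    obtain ⟨e₀, he₀⟩ := hxipos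
    have hzposi : 0 < P.mulVec x i := by
      rw [Matrix.mulVec, dotProduct]
      refine Finset.sum_pos' (fun k _ => mul_nonneg (hP i k).le (hx0 k)) ⟨e₀, Finset.mem_univ _, ?_⟩
      exact mul_pos (hP i e₀) he₀
    have h2 := congrFun hPx i
    simp only [Pi.smul_apply, smul_eq_mul] at h2
    rw [h2] at hzposi
    have hpow : 0 < (1 + ρ) ^ m := by positivity
    nlinarith [hzposi, hpow]
  refine ⟨ρ, x, lt_of_lt_of_le hr₀pos hρge, hxpos, heig, ?_⟩
  intro r v hvne hveq
  obtain ⟨i₀, -, hmaxi⟩ := Finset.exists_max_image Finset.univ (fun i => |v i| / x i)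
    Finset.univ_nonempty
  set c : ℝ := |v i₀| / x i₀ with hc
  have hvc : ∀ i, |v i| ≤ c * x i := by
    intro i
    have := hmaxi i (Finset.mem_univ i)
    exact (div_le_iff₀ (hxpos i)).mp this
  have hcpos : 0 < c := by
    obtain ⟨j, hj⟩ := Function.ne_iff.mp hvne
    have h1 : 0 < |v j| / x j := div_pos (abs_pos.mpr hj) (hxpos j)
    exact lt_of_lt_of_le h1 (hmaxi j (Finset.mem_univ j))
  have hceq : c * x i₀ = |v i₀| := div_mul_cancel₀ _ (hxpos i₀).ne'
  have hvpos : 0 < |v i₀| := by rw [← hceq]; exact mul_pos hcpos (hxpos i₀)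
  have hkey : |r| * |v i₀| ≤ ρ * |v i₀| := by
    have h1 : (M.mulVec v) i₀ = r * v i₀ := by
      have := congrFun hveq i₀
      simpa using this
    have h2 : |r| * |v i₀| = |(M.mulVec v) i₀| := by rw [h1, abs_mul]
    rw [h2]
    have h3 : |(M.mulVec v) i₀| ≤ ∑ j, M i₀ j * |v j| := by
      rw [Matrix.mulVec, dotProduct]
      refine le_trans (Finset.abs_sum_le_sum_abs _ _) ?_
      refine Finset.sum_le_sum fun j _ => ?_
      rw [abs_mul, abs_of_nonneg (hnn i₀ j)]
    have h4 : ∑ j, M i₀ j * |v j| ≤ c * ∑ j, M i₀ j * x j := by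
      rw [Finset.mul_sum]
      refine Finset.sum_le_sum fun j _ => ?_
      calc M i₀ j * |v j| ≤ M i₀ j * (c * x j) :=
            mul_le_mul_of_nonneg_left (hvc j) (hnn i₀ j)
      _ = c * (M i₀ j * x j) := by ring
    have h5 : (∑ j, M i₀ j * x j) = ρ * x i₀ := by
      have := congrFun heig i₀
      rw [Matrix.mulVec, dotProduct] at this
      simpa using this
    calc |(M.mulVec v) i₀| ≤ c * ∑ j, M i₀ j * x j := le_trans h3 h4
    _ = c * (ρ * x i₀) := by rw [h5]
    _ = ρ * (c * x i₀) := by ring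
    _ = ρ * |v i₀| := by rw [hceq]
  have habs : |r| ≤ ρ := le_of_mul_le_mul_right (by linarith [hkey]) hvpos
  exact le_trans (le_abs_self r) habs

end PF




lemma card_darts_head (w : V) :
    (Finset.univ.filter (fun d : G.Dart => d.snd = w)).card = G.degree w := by
  rw [← G.card_neighborFinset_eq_degree]
  apply Finset.card_bij (fun d _ => d.fst)
  · intro d hd
    rw [Finset.mem_filter] at hd
    rw [SimpleGraph.mem_neighborFinset]
    exact hd.2 ▸ d.adj.symm
  · intro d1 h1 d2 h2 hf
    rw [Finset.mem_filter] at h1 h2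
    exact SimpleGraph.Dart.ext _ _ (Prod.ext hf (h1.2.trans h2.2.symm))
  · intro b hb
    rw [SimpleGraph.mem_neighborFinset] at hb
    exact ⟨⟨(b, w), hb.symm⟩, Finset.mem_filter.mpr ⟨Finset.mem_univ _, rfl⟩, rfl⟩

lemma card_darts_tail (w : V) :
    (Finset.univ.filter (fun d : G.Dart => d.fst = w)).card = G.degree w := by
  rw [← G.card_neighborFinset_eq_degree]
  apply Finset.card_bij (fun d _ => d.snd)
  · intro d hd
    rw [Finset.mem_filter] at hd
    rw [SimpleGraph.mem_neighborFinset]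
    exact hd.2 ▸ d.adj
  · intro d1 h1 d2 h2 hf
    rw [Finset.mem_filter] at h1 h2
    exact SimpleGraph.Dart.ext _ _ (Prod.ext (h1.2.trans h2.2.symm) hf)
  · intro b hb
    rw [SimpleGraph.mem_neighborFinset] at hb
    exact ⟨⟨(w, b), hb⟩, Finset.mem_filter.mpr ⟨Finset.mem_univ _, rfl⟩, rfl⟩


section Counting

variable (hmin : ∀ v, 2 ≤ G.degree v)
include hmin

lemma outdeg_pos (d : G.Dart) : 0 < outdeg G d := by
  have := hmin d.snd; unfold outdeg; omega

lemma filter_step_out (d : G.Dart) :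
    Finset.univ.filter (fun e : G.Dart => Step G d e) =
      (Finset.univ.filter (fun e : G.Dart => e.fst = d.snd)).erase d.symm := by
  ext e
  simp only [Finset.mem_filter, Finset.mem_erase, Finset.mem_univ, true_and]
  constructor
  · rintro ⟨h1, h2⟩; exact ⟨h2, h1.symm⟩
  · rintro ⟨h1, h2⟩; exact ⟨h2.symm, h1⟩

lemma filter_step_in (e : G.Dart) :
    Finset.univ.filter (fun d : G.Dart => Step G d e) =
      (Finset.univ.filter (fun d : G.Dart => d.snd = e.fst)).erase e.symm := by
  ext d
  simp only [Finset.mem_filter, Finset.mem_erase, Finset.mem_univ, true_and]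
  constructor
  · rintro ⟨h1, h2⟩
    refine ⟨?_, h1⟩
    intro hcon
    exact h2 (by rw [hcon, SimpleGraph.Dart.symm_symm])
  · rintro ⟨h1, h2⟩
    refine ⟨h2, ?_⟩
    intro hcon
    exact h1 (by rw [hcon, SimpleGraph.Dart.symm_symm])

lemma card_step_out (d : G.Dart) :
    (Finset.univ.filter (fun e : G.Dart => Step G d e)).card = outdeg G d := by
  rw [filter_step_out hmin, Finset.card_erase_of_mem, card_darts_tail]
  · rfl
  · exact Finset.mem_filter.mpr ⟨Finset.mem_univ _, rfl⟩

lemma card_step_in (e : G.Dart) :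
    (Finset.univ.filter (fun d : G.Dart => Step G d e)).card = G.degree e.fst - 1 := by
  rw [filter_step_in hmin, Finset.card_erase_of_mem, card_darts_head]
  exact Finset.mem_filter.mpr ⟨Finset.mem_univ _, rfl⟩

/-- Row sums of the NBRW transition matrix equal 1. -/
lemma transMat_row_sum (d : G.Dart) : ∑ e, transMat G d e = 1 := by
  unfold transMat
  rw [Finset.sum_ite, Finset.sum_const_zero, add_zero, Finset.sum_const, card_step_out hmin,
    nsmul_eq_mul, mul_inv_cancel₀]
  exact_mod_cast (outdeg_pos hmin d).ne'

/-- Column sums of the NBRW transition matrix equal 1. -/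
lemma transMat_col_sum (e : G.Dart) : ∑ d, transMat G d e = 1 := by
  unfold transMat
  have houtd : ∀ d : G.Dart, Step G d e → (outdeg G d : ℝ) = ((G.degree e.fst - 1 : ℕ) : ℝ) := by
    intro d hd
    unfold outdeg
    rw [hd.1]
  calc ∑ d, (if Step G d e then ((outdeg G d : ℝ))⁻¹ else 0)
      = ∑ d, (if Step G d e then ((G.degree e.fst - 1 : ℕ) : ℝ)⁻¹ else 0) :=
        Finset.sum_congr rfl fun d _ => by
          by_cases hd : Step G d e
          · rw [if_pos hd, if_pos hd, houtd d hd]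
          · rw [if_neg hd, if_neg hd]
  _ = 1 := by
      rw [Finset.sum_ite, Finset.sum_const_zero, add_zero, Finset.sum_const, card_step_in hmin,
        nsmul_eq_mul, mul_inv_cancel₀]
      have := hmin e.fst
      have hpos : 0 < G.degree e.fst - 1 := by omega
      exact_mod_cast hpos.ne'

end Counting

section WalkSum

/-- Sum over all dart sequences of entry products equals total mass of the matrix power. -/
lemma sum_prod_walk (M : Matrix G.Dart G.Dart ℝ) (ℓ : ℕ) (g : G.Dart → ℝ) :
    ∑ ω : Fin (ℓ + 1) → G.Dart, (g (ω 0) * ∏ i : Fin ℓ, M (ω i.castSucc) (ω i.succ))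
      = ∑ e, Matrix.vecMul g (M ^ ℓ) e := by
  induction ℓ generalizing g with
  | zero =>
    simp only [pow_zero, Matrix.vecMul_one]
    rw [Fintype.sum_equiv (Equiv.funUnique (Fin 1) G.Dart)
      (fun ω => g (ω 0) * ∏ i : Fin 0, M (ω i.castSucc) (ω i.succ)) (fun d => g d)]
    intro ω
    simp
  | succ n ih =>
    rw [← Equiv.sum_comp (Fin.consEquiv (fun _ : Fin (n + 2) => G.Dart))
      (fun ω => g (ω 0) * ∏ i : Fin (n+1), M (ω i.castSucc) (ω i.succ)), Fintype.sum_prod_type]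
    have hterm : ∀ (d : G.Dart) (ω' : Fin (n+1) → G.Dart),
        (fun ω => g (ω 0) * ∏ i : Fin (n+1), M (ω i.castSucc) (ω i.succ))
            ((Fin.consEquiv (fun _ : Fin (n + 2) => G.Dart)) (d, ω'))
          = (g d * M d (ω' 0)) * ∏ i : Fin n, M (ω' i.castSucc) (ω' i.succ) := by
      intro d ω'
      show g ((Fin.cons d ω' : Fin (n+2) → G.Dart) 0) *
          ∏ i : Fin (n+1), M ((Fin.cons d ω' : Fin (n+2) → G.Dart) i.castSucc)
            ((Fin.cons d ω' : Fin (n+2) → G.Dart) i.succ) = _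
      rw [Fin.prod_univ_succ]
      have h0 : ((Fin.cons d ω' : Fin (n+2) → G.Dart) ((0 : Fin (n+1)).castSucc)) = d := by
        rw [Fin.castSucc_zero, Fin.cons_zero]
      have h1 : ((Fin.cons d ω' : Fin (n+2) → G.Dart) ((0 : Fin (n+1)).succ)) = ω' 0 :=
        Fin.cons_succ _ _ _
      have hre : ∀ i : Fin n,
          ((Fin.cons d ω' : Fin (n+2) → G.Dart) (i.succ).castSucc) = ω' i.castSucc := by
        intro i; rw [← Fin.succ_castSucc]; exact Fin.cons_succ _ _ _
      have hre2 : ∀ i : Fin n,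
          ((Fin.cons d ω' : Fin (n+2) → G.Dart) (i.succ).succ) = ω' i.succ := fun i =>
        Fin.cons_succ _ _ _
      rw [h0, h1, Fin.cons_zero,
        Finset.prod_congr rfl (fun (i : Fin n) _ => by rw [hre i, hre2 i])]
      ring
    rw [Finset.sum_congr rfl (fun d _ => Finset.sum_congr rfl fun ω' _ => hterm d ω')]
    rw [Finset.sum_comm]
    have hinner : ∀ ω' : Fin (n+1) → G.Dart,
        ∑ d : G.Dart, ((g d * M d (ω' 0)) * ∏ i : Fin n, M (ω' i.castSucc) (ω' i.succ))
          = (Matrix.vecMul g M) (ω' 0) * ∏ i : Fin n, M (ω' i.castSucc) (ω' i.succ) := by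
      intro ω'
      rw [← Finset.sum_mul]
      congr 1
    rw [Finset.sum_congr rfl fun ω' _ => hinner ω']
    rw [ih (Matrix.vecMul g M)]
    refine Finset.sum_congr rfl fun e _ => ?_
    rw [Matrix.vecMul_vecMul, ← pow_succ']

variable (beta : G.Dart → ℝ)

/-- The expectation of the multiplicative observable equals the normalized total mass of
the `ℓ`-th power of the modified matrix. -/
lemma expect_eq_sum_pow (M : Matrix G.Dart G.Dart ℝ)
    (hMeq : ∀ d e, M d e = transMat G d e * beta d) (ℓ : ℕ) :
    expect G (fun ω : NBWalk G ℓ => ∏ i : Fin ℓ, beta (ω.1 i.castSucc))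
      = (Fintype.card G.Dart : ℝ)⁻¹ * ∑ e, ∑ d, (M ^ ℓ) d e := by
  classical
  set F : (Fin (ℓ + 1) → G.Dart) → ℝ := fun ω => ∏ i : Fin ℓ, M (ω i.castSucc) (ω i.succ)
    with hF
  have hzero : ∀ ω, ¬ IsNBWalk G ω → F ω = 0 := by
    intro ω hω
    rw [IsNBWalk] at hω
    push_neg at hω
    obtain ⟨i, hi⟩ := hω
    refine Finset.prod_eq_zero (Finset.mem_univ i) ?_
    rw [hMeq]
    unfold transMat
    rw [if_neg hi, zero_mul]
  have hwalk : ∀ ω : NBWalk G ℓ,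
      mu G ω * (∏ i : Fin ℓ, beta (ω.1 i.castSucc)) = (Fintype.card G.Dart : ℝ)⁻¹ * F ω.1 := by
    intro ω
    rw [mu, hF, mul_assoc]
    congr 1
    rw [← Finset.prod_mul_distrib]
    refine Finset.prod_congr rfl fun i _ => ?_
    rw [hMeq]
    unfold transMat
    rw [if_pos (ω.2 i)]
  have hsubtype : ∑ ω : NBWalk G ℓ, F ω.1 = ∑ ω : Fin (ℓ + 1) → G.Dart, F ω := by
    rw [← Finset.sum_filter_of_ne (p := IsNBWalk G) (fun ω _ hω => by
      by_contra hcon; exact hω (hzero ω hcon))]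
    exact (Finset.sum_subtype _ (fun ω => by simp) F).symm
  have h3 := sum_prod_walk M ℓ (fun _ => 1)
  simp only [one_mul] at h3
  have h4 : ∑ ω : Fin (ℓ + 1) → G.Dart, F ω = ∑ e, ∑ d, (M ^ ℓ) d e := by
    rw [hF, h3]
    exact Finset.sum_congr rfl fun e _ => by simp [Matrix.vecMul, dotProduct]
  show (∑ ω : NBWalk G ℓ, mu G ω * (∏ i : Fin ℓ, beta (ω.1 i.castSucc))) = _
  rw [Finset.sum_congr rfl fun ω _ => hwalk ω, ← Finset.mul_sum, hsubtype, h4]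

end WalkSum

section Limit

/-- Generic: if `c₁ ρ^ℓ ≤ s ℓ ≤ c₂ ρ^ℓ` then `s ℓ ^ (1/ℓ) → ρ`. -/
lemma tendsto_rpow_inv_of_bounds {s : ℕ → ℝ} {ρ c₁ c₂ : ℝ} (hρ : 0 < ρ) (hc₁ : 0 < c₁)
    (hb1 : ∀ ℓ : ℕ, c₁ * ρ ^ ℓ ≤ s ℓ) (hb2 : ∀ ℓ : ℕ, s ℓ ≤ c₂ * ρ ^ ℓ) :
    Filter.Tendsto (fun ℓ : ℕ => (s ℓ) ^ ((ℓ : ℝ)⁻¹)) Filter.atTop (nhds ρ) := by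
  have hc₂ : 0 < c₂ := by
    have h1 := hb1 0; have h2 := hb2 0
    simp only [pow_zero, mul_one] at h1 h2
    linarith
  have hspos : ∀ ℓ, 0 < s ℓ := fun ℓ => lt_of_lt_of_le (mul_pos hc₁ (pow_pos hρ ℓ)) (hb1 ℓ)
  have hinv0 : Filter.Tendsto (fun ℓ : ℕ => ((ℓ : ℝ))⁻¹) Filter.atTop (nhds 0) :=
    tendsto_inv_atTop_nhds_zero_nat
  have hlow : Filter.Tendsto (fun ℓ : ℕ => Real.log ρ + Real.log c₁ * ((ℓ : ℝ))⁻¹)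
      Filter.atTop (nhds (Real.log ρ)) := by
    have := (hinv0.const_mul (Real.log c₁)).const_add (Real.log ρ)
    simpa using this
  have hhigh : Filter.Tendsto (fun ℓ : ℕ => Real.log ρ + Real.log c₂ * ((ℓ : ℝ))⁻¹)
      Filter.atTop (nhds (Real.log ρ)) := by
    have := (hinv0.const_mul (Real.log c₂)).const_add (Real.log ρ)
    simpa using this
  have hlog : Filter.Tendsto (fun ℓ : ℕ => Real.log (s ℓ) * ((ℓ : ℝ))⁻¹)
      Filter.atTop (nhds (Real.log ρ)) := by
    refine tendsto_of_tendsto_of_tendsto_of_le_of_le' hlow hhigh ?_ ?_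
    · filter_upwards [Filter.eventually_ge_atTop 1] with ℓ hℓ
      have hℓR : (0:ℝ) < (ℓ : ℝ) := by exact_mod_cast hℓ
      have h1 : Real.log (c₁ * ρ ^ ℓ) ≤ Real.log (s ℓ) :=
        Real.log_le_log (mul_pos hc₁ (pow_pos hρ ℓ)) (hb1 ℓ)
      rw [Real.log_mul hc₁.ne' (pow_pos hρ ℓ).ne', Real.log_pow] at h1
      have h2 : (Real.log c₁ + ℓ * Real.log ρ) * ((ℓ:ℝ))⁻¹ ≤ Real.log (s ℓ) * ((ℓ:ℝ))⁻¹ :=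
        mul_le_mul_of_nonneg_right h1 (by positivity)
      calc Real.log ρ + Real.log c₁ * ((ℓ:ℝ))⁻¹
          = (Real.log c₁ + ℓ * Real.log ρ) * ((ℓ:ℝ))⁻¹ := by
            field_simp
            ring
      _ ≤ Real.log (s ℓ) * ((ℓ:ℝ))⁻¹ := h2
    · filter_upwards [Filter.eventually_ge_atTop 1] with ℓ hℓ
      have hℓR : (0:ℝ) < (ℓ : ℝ) := by exact_mod_cast hℓ
      have h1 : Real.log (s ℓ) ≤ Real.log (c₂ * ρ ^ ℓ) :=
        Real.log_le_log (hspos ℓ) (hb2 ℓ)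
      rw [Real.log_mul hc₂.ne' (pow_pos hρ ℓ).ne', Real.log_pow] at h1
      have h2 : Real.log (s ℓ) * ((ℓ:ℝ))⁻¹ ≤ (Real.log c₂ + ℓ * Real.log ρ) * ((ℓ:ℝ))⁻¹ :=
        mul_le_mul_of_nonneg_right h1 (by positivity)
      calc Real.log (s ℓ) * ((ℓ:ℝ))⁻¹ ≤ (Real.log c₂ + ℓ * Real.log ρ) * ((ℓ:ℝ))⁻¹ := h2
      _ = Real.log ρ + Real.log c₂ * ((ℓ:ℝ))⁻¹ := by
            field_simp
            ring
  have hexp := (Real.continuous_exp.tendsto (Real.log ρ)).comp hlog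
  rw [Real.exp_log hρ] at hexp
  refine hexp.congr fun ℓ => ?_
  simp only [Function.comp_apply]
  rw [Real.rpow_def_of_pos (hspos ℓ)]

/-- `∏ i, y ^ w i = y ^ ∑ i, w i` for positive `y` (real exponents). -/
lemma prod_rpow_sum {ι : Type*} (s : Finset ι) {y : ℝ} (hy : 0 < y) (w : ι → ℝ) :
    ∏ i ∈ s, y ^ w i = y ^ (∑ i ∈ s, w i) := by
  rw [Real.rpow_def_of_pos hy, Finset.mul_sum, Real.exp_sum]
  exact Finset.prod_congr rfl fun i _ => Real.rpow_def_of_pos hy (w i)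

end Limit

section EigPow

variable {D : Type} [Fintype D] [DecidableEq D]

lemma mulVec_pow_eig (M : Matrix D D ℝ) (x : D → ℝ) (ρ : ℝ)
    (heig : M.mulVec x = ρ • x) (ℓ : ℕ) :
    (M ^ ℓ).mulVec x = (ρ ^ ℓ) • x := by
  induction ℓ with
  | zero => simp [Matrix.one_mulVec]
  | succ n ih =>
    rw [pow_succ', ← Matrix.mulVec_mulVec, ih, Matrix.mulVec_smul, heig, smul_smul, ← pow_succ]

end EigPow

section Main

theorem perron_modified_transition_aux (h : NBIrreducible G)
    (beta : G.Dart → ℝ) (hbeta : ∀ d : G.Dart, 0 < beta d) :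
    Filter.Tendsto (fun ℓ : ℕ =>
        (expect G (fun ω : NBWalk G ℓ => ∏ i : Fin ℓ, beta (ω.1 i.castSucc))) ^
          ((ℓ : ℝ)⁻¹))
      Filter.atTop (nhds (perron (fun d e : G.Dart => transMat G d e * beta d))) ∧
    perron (fun d e : G.Dart => transMat G d e * beta d) ≥
      (∏ d : G.Dart, beta d) ^ ((Fintype.card G.Dart : ℝ)⁻¹) := by
  classical
  obtain ⟨hconn0, hmin, hdeg3⟩ := h
  have hconn : G.Preconnected := hconn0.1
  haveI : Nonempty V := hconn0.2
  haveI : Nonempty G.Dart := by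
    obtain ⟨v⟩ := ‹Nonempty V›
    have hdeg : 0 < G.degree v := lt_of_lt_of_le (by norm_num) (hmin v)
    obtain ⟨w, hw⟩ := SimpleGraph.degree_pos_iff_exists_adj G v |>.mp hdeg
    exact ⟨⟨(v, w), hw⟩⟩
  set M : Matrix G.Dart G.Dart ℝ := fun d e => transMat G d e * beta d with hMdef
  have hMapp : ∀ d e : G.Dart, M d e = transMat G d e * beta d := fun _ _ => rfl
  have htnn : ∀ d e : G.Dart, 0 ≤ transMat G d e := by
    intro d e
    unfold transMat
    by_cases hde : Step G d e
    · rw [if_pos hde]; positivity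
    · rw [if_neg hde]
  have hMnn : ∀ d e : G.Dart, 0 ≤ M d e := fun d e => mul_nonneg (htnn d e) (hbeta d).le
  have htpos : ∀ d e : G.Dart, Step G d e → 0 < transMat G d e := by
    intro d e hde
    unfold transMat
    rw [if_pos hde]
    have := outdeg_pos hmin d
    positivity
  have hMpos : ∀ d e : G.Dart, Step G d e → 0 < M d e := fun d e hde =>
    mul_pos (htpos d e hde) (hbeta d)
  have hrow : ∀ d : G.Dart, ∃ e, 0 < M d e := by
    intro d
    obtain ⟨e, he⟩ := exists_step hmin d
    exact ⟨e, hMpos d e he⟩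
  have hirr : ∀ d e : G.Dart, Relation.ReflTransGen (Step G) d e := fun d e =>
    reach_all hmin hconn hdeg3 d e
  have hprim := exists_one_add_pow_pos hMnn hMpos hirr
  obtain ⟨ρ, x, hρpos, hxpos, heig, hub⟩ := pf_core M hMnn hrow hprim
  -- identification of the Perron eigenvalue
  have hxne : x ≠ 0 := by
    intro hcon
    have := hxpos (Classical.arbitrary G.Dart)
    rw [hcon] at this
    simp at this
  have hperron : perron (fun d e : G.Dart => transMat G d e * beta d) = ρ := by
    show perron M = ρ
    unfold perron
    refine IsGreatest.csSup_eq ⟨⟨x, hxne, heig⟩, ?_⟩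
    rintro r ⟨v, hvne, hveq⟩
    exact hub r v hvne hveq
  rw [hperron]
  set N : ℕ := Fintype.card G.Dart with hN
  have hNpos : 0 < N := Fintype.card_pos
  have hNR : (0:ℝ) < (N : ℝ) := by exact_mod_cast hNpos
  -- bounds on the total mass of powers
  set a : ℝ := Finset.univ.inf' Finset.univ_nonempty x with ha
  set b : ℝ := Finset.univ.sup' Finset.univ_nonempty x with hb
  have hapos : 0 < a := by
    rw [ha, Finset.lt_inf'_iff]
    exact fun i _ => hxpos i
  have hax : ∀ e, a ≤ x e := fun e => Finset.inf'_le _ (Finset.mem_univ e)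
  have hxb : ∀ e, x e ≤ b := fun e => Finset.le_sup' _ (Finset.mem_univ e)
  have hbpos : 0 < b := lt_of_lt_of_le hapos (le_trans (hax (Classical.arbitrary _))
    (hxb (Classical.arbitrary _)))
  set Sx : ℝ := ∑ e, x e with hSx
  have hSxpos : 0 < Sx := Finset.sum_pos (fun i _ => hxpos i) Finset.univ_nonempty
  have hmass : ∀ ℓ : ℕ, ∑ d, ∑ e, (M ^ ℓ) d e * x e = ρ ^ ℓ * Sx := by
    intro ℓ
    have := mulVec_pow_eig M x ρ heig ℓ
    calc ∑ d, ∑ e, (M ^ ℓ) d e * x e = ∑ d, ((M ^ ℓ).mulVec x) d := by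
          refine Finset.sum_congr rfl fun d _ => ?_
          rw [Matrix.mulVec, dotProduct]
    _ = ∑ d, (ρ ^ ℓ * x d) := by
          refine Finset.sum_congr rfl fun d _ => ?_
          rw [this]
          simp
    _ = ρ ^ ℓ * Sx := by rw [← Finset.mul_sum]
  set T : ℕ → ℝ := fun ℓ => ∑ e, ∑ d, (M ^ ℓ) d e with hT
  have hTswap : ∀ ℓ, T ℓ = ∑ d, ∑ e, (M ^ ℓ) d e := fun ℓ => Finset.sum_comm
  have hTlow : ∀ ℓ : ℕ, ρ ^ ℓ * Sx ≤ b * T ℓ := by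
    intro ℓ
    rw [← hmass ℓ, hTswap, Finset.mul_sum]
    refine Finset.sum_le_sum fun d _ => ?_
    rw [Finset.mul_sum]
    refine Finset.sum_le_sum fun e _ => ?_
    calc (M ^ ℓ) d e * x e ≤ (M ^ ℓ) d e * b :=
          mul_le_mul_of_nonneg_left (hxb e) (pow_entry_nonneg hMnn ℓ d e)
    _ = b * (M ^ ℓ) d e := mul_comm _ _
  have hThigh : ∀ ℓ : ℕ, a * T ℓ ≤ ρ ^ ℓ * Sx := by
    intro ℓ
    rw [← hmass ℓ, hTswap, Finset.mul_sum]
    refine Finset.sum_le_sum fun d _ => ?_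
    rw [Finset.mul_sum]
    refine Finset.sum_le_sum fun e _ => ?_
    calc a * (M ^ ℓ) d e = (M ^ ℓ) d e * a := mul_comm _ _
    _ ≤ (M ^ ℓ) d e * x e := mul_le_mul_of_nonneg_left (hax e) (pow_entry_nonneg hMnn ℓ d e)
  have hexp : ∀ ℓ : ℕ,
      expect G (fun ω : NBWalk G ℓ => ∏ i : Fin ℓ, beta (ω.1 i.castSucc))
        = (N : ℝ)⁻¹ * T ℓ := fun ℓ => expect_eq_sum_pow beta M hMapp ℓ
  constructor
  · -- the limit statement
    have hc₁ : (0:ℝ) < Sx / (b * N) := by positivity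
    refine tendsto_rpow_inv_of_bounds (c₁ := Sx / (b * N)) (c₂ := Sx / (a * N)) hρpos hc₁ ?_ ?_
    · intro ℓ
      rw [hexp ℓ]
      have h1 := hTlow ℓ
      rw [div_mul_eq_mul_div, div_le_iff₀ (by positivity)]
      calc Sx * ρ ^ ℓ = ρ ^ ℓ * Sx := mul_comm _ _
      _ ≤ b * T ℓ := h1
      _ = (N:ℝ)⁻¹ * T ℓ * (b * N) := by
            field_simp
    · intro ℓ
      rw [hexp ℓ]
      have h1 := hThigh ℓ
      rw [div_mul_eq_mul_div, le_div_iff₀ (by positivity)]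
      calc (N:ℝ)⁻¹ * T ℓ * (a * N) = a * T ℓ := by
            field_simp
      _ ≤ ρ ^ ℓ * Sx := h1
      _ = Sx * ρ ^ ℓ := mul_comm _ _
  · -- the inequality
    have hgm : ∀ d : G.Dart, beta d * ∏ e, (x e) ^ (transMat G d e) ≤ ρ * x d := by
      intro d
      have hAM : ∏ e, (x e) ^ (transMat G d e) ≤ ∑ e, transMat G d e * x e :=
        Real.geom_mean_le_arith_mean_weighted Finset.univ _ _
          (fun e _ => htnn d e) (transMat_row_sum hmin d) (fun e _ => (hxpos e).le)
      have heigd : (∑ e, M d e * x e) = ρ * x d := by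
        have := congrFun heig d
        rw [Matrix.mulVec, dotProduct] at this
        simpa using this
      have hsum : (∑ e, transMat G d e * x e) * beta d = ρ * x d := by
        rw [← heigd, Finset.sum_mul]
        refine Finset.sum_congr rfl fun e _ => ?_
        rw [hMapp]
        ring
      calc beta d * ∏ e, (x e) ^ (transMat G d e)
          ≤ beta d * ∑ e, transMat G d e * x e :=
            mul_le_mul_of_nonneg_left hAM (hbeta d).le
      _ = (∑ e, transMat G d e * x e) * beta d := mul_comm _ _
      _ = ρ * x d := hsum
    have hprodineq : (∏ d : G.Dart, beta d) * ∏ d : G.Dart, x d ≤ ρ ^ N * ∏ d : G.Dart, x d := by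
      have h1 : ∏ d : G.Dart, (beta d * ∏ e, (x e) ^ (transMat G d e))
          ≤ ∏ d : G.Dart, (ρ * x d) := by
        refine Finset.prod_le_prod (fun d _ => ?_) (fun d _ => hgm d)
        have : 0 < ∏ e, (x e) ^ (transMat G d e) :=
          Finset.prod_pos fun e _ => Real.rpow_pos_of_pos (hxpos e) _
        exact mul_nonneg (hbeta d).le this.le
      have h2 : ∏ d : G.Dart, (ρ * x d) = ρ ^ N * ∏ d : G.Dart, x d := by
        rw [Finset.prod_mul_distrib, Finset.prod_const, Finset.card_univ, hN]
      have h3 : ∏ d : G.Dart, (beta d * ∏ e, (x e) ^ (transMat G d e))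
          = (∏ d : G.Dart, beta d) * ∏ d : G.Dart, x d := by
        rw [Finset.prod_mul_distrib]
        congr 1
        rw [Finset.prod_comm]
        calc ∏ e : G.Dart, ∏ d : G.Dart, (x e) ^ (transMat G d e)
            = ∏ e : G.Dart, (x e) ^ (∑ d, transMat G d e) :=
              Finset.prod_congr rfl fun e _ => prod_rpow_sum Finset.univ (hxpos e) _
        _ = ∏ e : G.Dart, x e := by
              refine Finset.prod_congr rfl fun e _ => ?_
              rw [transMat_col_sum hmin e, Real.rpow_one]
      rw [← h2, ← h3]
      exact h1
    have hprodx : 0 < ∏ d : G.Dart, x d := Finset.prod_pos fun d _ => hxpos d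
    have hfin : (∏ d : G.Dart, beta d) ≤ ρ ^ N :=
      le_of_mul_le_mul_right (by linarith [hprodineq]) hprodx
    have hrpow : ((∏ d : G.Dart, beta d) : ℝ) ^ ((N : ℝ))⁻¹ ≤ (ρ ^ N) ^ ((N : ℝ))⁻¹ :=
      Real.rpow_le_rpow (Finset.prod_nonneg fun d _ => (hbeta d).le) hfin (by positivity)
    rw [Real.pow_rpow_inv_natCast hρpos.le hNpos.ne'] at hrpow
    exact hrpow

end Main

end Dev

/-- For an NB-irreducible graph and positive `β`, the Perron eigenvalue
of the modified matrix `Π_β` equals `lim (E_{Ω_ℓ}[X_β])^{1/ℓ}` and is at least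
`(∏_e β(e))^{1/|E⃗|}`. -/
theorem perron_modified_transition (h : NBIrreducible G)
    (beta : G.Dart → ℝ) (hbeta : ∀ d : G.Dart, 0 < beta d) :
    Tendsto (fun ℓ : ℕ =>
        (expect G (fun ω : NBWalk G ℓ => ∏ i : Fin ℓ, beta (ω.1 i.castSucc))) ^
          ((ℓ : ℝ)⁻¹))
      atTop (nhds (perron (fun d e : G.Dart => transMat G d e * beta d))) ∧
    perron (fun d e : G.Dart => transMat G d e * beta d) ≥
      (∏ d : G.Dart, beta d) ^ ((Fintype.card G.Dart : ℝ)⁻¹) := by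
  exact perron_modified_transition_aux (G := G) h beta hbeta

end NB
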